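/- Let n₁,…,n_k ≥ 1 be integers, let n = lcm(n₁,…,n_k) and write n = pⱼ nⱼ. Let a₂,…,a_k be nonzero constants with |a₂^{n₂} + ⋯ + a_k^{n_k}| ≤ 1. Then ψ(z) = log(1 − a₂^{n₂} z^n − ⋯ − a_k^{n_k} z^n) is holomorphic on 𝔻, and the functions f₁ = exp(ψ/n₁), fⱼ(z) = aⱼ z^{pⱼ} (j = 2,…,k) are holomorphic on 𝔻 and satisfy f₁^{n₁} + f₂^{n₂} + ⋯ + f_k^{n_k} = 1. -/

import Mathlib

open Metric

/-!
The hypothesis `‖∑ a_j^{n_j}‖ ≤ 1` keeps `w = 1 - (∑ a_j^{n_j}) z^n` in the disk `|w - 1| < 1`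
for `|z| < 1`, which lies in the slit plane, so the principal logarithm gives a holomorphic `ψ`
with `exp ψ = w`. Then `exp (ψ / n₀)^{n₀} = w`, while `(a_j z^{p_j})^{n_j} = a_j^{n_j} z^n`
because `n_j p_j = n`; the two contributions add up to `1`.
-/

open Complex

lemma norm_mul_pow_lt_one {c z : ℂ} {n : ℕ} (hc : ‖c‖ ≤ 1) (hz : ‖z‖ < 1) (hn : n ≠ 0) :
    ‖c * z ^ n‖ < 1 := by
  rw [norm_mul, norm_pow]
  calc ‖c‖ * ‖z‖ ^ n ≤ 1 * ‖z‖ ^ n := by gcongr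
    _ < 1 := by rw [one_mul]; exact pow_lt_one₀ (norm_nonneg z) hz hn

lemma one_sub_mem_slitPlane_of_norm_lt_one {w : ℂ} (hw : ‖w‖ < 1) : 1 - w ∈ slitPlane := by
  simpa [sub_eq_add_neg] using mem_slitPlane_of_norm_lt_one (z := -w) (by simpa)

lemma one_sub_mul_pow_mem_slitPlane {c z : ℂ} {n : ℕ} (hc : ‖c‖ ≤ 1) (hn : n ≠ 0)
    (hz : z ∈ ball (0 : ℂ) 1) : 1 - c * z ^ n ∈ slitPlane :=
  one_sub_mem_slitPlane_of_norm_lt_one <| norm_mul_pow_lt_one hc (mem_ball_zero_iff.mp hz) hn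

lemma exp_div_natCast_pow {k : ℕ} (hk : k ≠ 0) (w : ℂ) : exp (w / k) ^ k = exp w := by
  rw [← exp_nat_mul, mul_div_cancel₀ _ (Nat.cast_ne_zero.mpr hk)]

lemma Finset.sum_mul_pow_pow_of_mul_eq {ι R : Type*} [CommSemiring R] (s : Finset ι)
    (a : ι → R) (e p : ι → ℕ) {n : ℕ} (hp : ∀ j, e j * p j = n) (z : R) :
    ∑ j ∈ s, (a j * z ^ p j) ^ e j = (∑ j ∈ s, a j ^ e j) * z ^ n := by
  rw [Finset.sum_mul]
  refine Finset.sum_congr rfl fun j _ => ?_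
  rw [mul_pow, ← pow_mul, mul_comm (p j), hp j]

theorem generalized_fermat_holomorphic_solution_disk_general (m : ℕ)
    (nv : Fin (m + 1) → ℕ) (hnv : ∀ j, 1 ≤ nv j)
    (n : ℕ) (hlcm : n = Finset.univ.lcm nv)
    (p : Fin (m + 1) → ℕ) (hp : ∀ j, nv j * p j = n)
    (a : Fin (m + 1) → ℂ)
    (hsum : ‖∑ j ∈ Finset.univ.filter (· ≠ (0 : Fin (m + 1))), a j ^ nv j‖ ≤ 1) :
    ∃ ψ : ℂ → ℂ, DifferentiableOn ℂ ψ (ball (0 : ℂ) 1) ∧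
      (∀ z ∈ ball (0 : ℂ) 1, Complex.exp (ψ z) =
        1 - (∑ j ∈ Finset.univ.filter (· ≠ (0 : Fin (m + 1))), a j ^ nv j) * z ^ n) ∧
      DifferentiableOn ℂ (fun z => Complex.exp (ψ z / (nv 0 : ℂ))) (ball (0 : ℂ) 1) ∧
      (∀ z ∈ ball (0 : ℂ) 1,
        Complex.exp (ψ z / (nv 0 : ℂ)) ^ (nv 0)
          + ∑ j ∈ Finset.univ.filter (· ≠ (0 : Fin (m + 1))),
              (a j * z ^ p j) ^ nv j = 1) := by
  set c := ∑ j ∈ Finset.univ.filter (· ≠ (0 : Fin (m + 1))), a j ^ nv j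
  have hn : n ≠ 0 := hlcm ▸ Finset.lcm_ne_zero_iff.mpr fun j _ => Nat.one_le_iff_ne_zero.mp (hnv j)
  have hslit : ∀ z ∈ ball (0 : ℂ) 1, 1 - c * z ^ n ∈ slitPlane := fun _ hz =>
    one_sub_mul_pow_mem_slitPlane hsum hn hz
  have hψ : DifferentiableOn ℂ (fun z => log (1 - c * z ^ n)) (ball 0 1) :=
    (by fun_prop : Differentiable ℂ fun z : ℂ => 1 - c * z ^ n).differentiableOn.clog hslit
  refine ⟨fun z => log (1 - c * z ^ n), hψ, fun z hz => exp_log (slitPlane_ne_zero (hslit z hz)),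
    (hψ.div_const _).cexp, fun z hz => ?_⟩
  rw [exp_div_natCast_pow (Nat.one_le_iff_ne_zero.mp (hnv 0)), exp_log (slitPlane_ne_zero (hslit z hz)),
    Finset.sum_mul_pow_pow_of_mul_eq _ _ _ _ hp]
  ring

/-- Let `n₀, …, n_m ≥ 1` (`k = m + 1 ≥ 2` exponents) with least common multiple
`n = p j * n j`, and let `a₁, …, a_m` be nonzero constants with `|∑_{j≠0} a_j^{n_j}| ≤ 1`.
Then `ψ(z) = log (1 − ∑_{j≠0} a_j^{n_j} z^n)` admits a holomorphic branch on the unit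
disk, and `f₀ = exp (ψ/n₀)`, `f_j(z) = a_j z^{p_j}` (`j ≠ 0`) are holomorphic on `𝔻` and
satisfy `f₀^{n₀} + ∑_{j≠0} f_j^{n_j} = 1`. -/
theorem generalized_fermat_holomorphic_solution_disk (m : ℕ) (hm : 1 ≤ m)
    (nv : Fin (m + 1) → ℕ) (hnv : ∀ j, 1 ≤ nv j)
    (n : ℕ) (hlcm : n = Finset.univ.lcm nv)
    (p : Fin (m + 1) → ℕ) (hp : ∀ j, nv j * p j = n)
    (a : Fin (m + 1) → ℂ) (ha : ∀ j, j ≠ 0 → a j ≠ 0)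
    (hsum : ‖∑ j ∈ Finset.univ.filter (· ≠ (0 : Fin (m + 1))), a j ^ nv j‖ ≤ 1) :
    ∃ ψ : ℂ → ℂ, DifferentiableOn ℂ ψ (ball (0 : ℂ) 1) ∧
      (∀ z ∈ ball (0 : ℂ) 1, Complex.exp (ψ z) =
        1 - (∑ j ∈ Finset.univ.filter (· ≠ (0 : Fin (m + 1))), a j ^ nv j) * z ^ n) ∧
      DifferentiableOn ℂ (fun z => Complex.exp (ψ z / (nv 0 : ℂ))) (ball (0 : ℂ) 1) ∧
      (∀ z ∈ ball (0 : ℂ) 1,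
        Complex.exp (ψ z / (nv 0 : ℂ)) ^ (nv 0)
          + ∑ j ∈ Finset.univ.filter (· ≠ (0 : Fin (m + 1))),
              (a j * z ^ p j) ^ nv j = 1) :=
  generalized_fermat_holomorphic_solution_disk_general m nv hnv n hlcm p hp a hsum
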